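/- (Observer dependence of affine distance.) Let x be a past-pointing lightlike vector and u, u′ observers in Minkowski space, with decompositions x = −d(u + w) = −d′(u′ + w′), where d, d′ > 0, w ∈ u^⊥, w′ ∈ u′^⊥, ‖w‖ = ‖w′‖ = 1, and u′ = γ(u + v) with v ∈ u^⊥, γ = −g(u,u′). Then d′ = γ(1 − g(v,w)) d; i.e., affine distance transforms under a change of observer exactly as frequency does. -/
import Mathlib


noncomputable section

/-- The Minkowski bilinear form on ℝ⁴ (signature (−,+,+,+)). -/
def g (x y : Fin 4 → ℝ) : ℝ :=
  -(x 0 * y 0) + x 1 * y 1 + x 2 * y 2 + x 3 * y 3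

/-- An observer: a future-pointing timelike unit vector. -/
def IsObserver (u : Fin 4 → ℝ) : Prop := g u u = -1 ∧ 0 < u 0

/-- A past-pointing lightlike vector. -/
def IsPastLightlike (x : Fin 4 → ℝ) : Prop := x ≠ 0 ∧ g x x = 0 ∧ x 0 < 0

lemma g_smul_left (c : ℝ) (x y : Fin 4 → ℝ) : g (c • x) y = c * g x y := by
  simp [g]; ring

lemma g_smul_right (c : ℝ) (x y : Fin 4 → ℝ) : g x (c • y) = c * g x y := by
  simp [g]; ring

lemma g_add_left (x y z : Fin 4 → ℝ) : g (x + y) z = g x z + g y z := by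
  simp [g]; ring

lemma g_add_right (x y z : Fin 4 → ℝ) : g x (y + z) = g x y + g x z := by
  simp [g]; ring

lemma g_symm (x y : Fin 4 → ℝ) : g x y = g y x := by
  simp [g]; ring

/-- Observer dependence of affine distance: `d' = γ (1 − g(v,w)) d`. -/
theorem affine_distance_observer_change (x u u' v w w' : Fin 4 → ℝ) (d d' γ : ℝ)
    (hx : IsPastLightlike x) (hu : IsObserver u) (hu' : IsObserver u')
    (hd : 0 < d) (hd' : 0 < d')
    (hw : g u w = 0) (hw1 : Real.sqrt (g w w) = 1)
    (hw' : g u' w' = 0) (hw'1 : Real.sqrt (g w' w') = 1)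
    (hxd : x = (-d) • (u + w)) (hxd' : x = (-d') • (u' + w'))
    (hv : g u v = 0) (hγ : γ = -(g u u')) (hu'v : u' = γ • (u + v)) :
    d' = γ * (1 - g v w) * d := by
  have hw'u' : g w' u' = 0 := (g_symm w' u').trans hw'
  have hwu : g w u = 0 := (g_symm w u).trans hw
  have h1 : g x u' = d' := by
    rw [hxd', g_smul_left, g_add_left, hu'.1, hw'u']; ring
  have h2 : g x u' = d * γ * (1 - g w v) := by
    rw [hxd, g_smul_left, g_add_left, hu'v, g_smul_right, g_smul_right,
      g_add_right, g_add_right, hu.1, hv, hwu]; ring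
  have hs : g v w = g w v := g_symm v w
  rw [hs]
  linarith [h1, h2]
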